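/- Suppose U−L ≥ 4. Then for every integer x with L ≤ x ≤ U, α(x)+β(x)=1; that is, starting from x the walk exits the interval (L,U) within finitely many steps almost surely. -/

import Mathlib

/-!
Put `N = U - L`. The blocks of driving steps `(jN, jN + N]` are disjoint, so the events "block `j`
consists of down-steps only" are independent, each of probability `(1 - p)^N > 0`; by the second
Borel–Cantelli lemma one of them occurs almost surely. A down-step of `ξ` is a step `-1` of the
walk, so during such a block the walk, if it has not reached `U`, falls by `N` to below `L`.
Since `τ_k` is the hitting time of `(-∞, L] ∪ [U, ∞)` before `k`, the events `A_k` and `B_k` are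
`S_τ ≤ L` and `S_τ ≥ U`: disjoint, measurable, with union the event of exiting by time `k`.
-/

open MeasureTheory ProbabilityTheory Filter
open scoped ENNReal Classical

noncomputable section

variable {Ω : Type*} [MeasurableSpace Ω]

/-- The `k`-th step of the ladder chain `L(2,2,p)` built from the driving
sequence `ξ` (indexed from 1): `X₁ = ±1` according to `ξ₁`, and for `k ≥ 2`,
`X_k = -1` if `ξ_k = -1`, `X_k = 2` if `ξ_k = ξ_{k-1} = 1`, and `X_k = 1`
if `ξ_k = 1, ξ_{k-1} = -1`. -/
def ladderX (ξ : ℕ → Ω → ℤ) (k : ℕ) (ω : Ω) : ℤ :=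
  if k = 1 then (if ξ 1 ω = 1 then 1 else -1)
  else if ξ k ω = -1 then -1
  else if ξ (k - 1) ω = 1 then 2 else 1

/-- The ladder chain `S_n = X₁ + ⋯ + X_n` (with `S_0 = 0`). -/
def ladderS (ξ : ℕ → Ω → ℤ) (n : ℕ) (ω : Ω) : ℤ :=
  ∑ k ∈ Finset.Icc 1 n, ladderX ξ k ω

/-- The truncated exit time `τ_k^x`: the least `l ≤ k` with `S_l^x ≤ L` or
`S_l^x ≥ U`, and `k` if there is no such `l`. -/
def ladderTau (ξ : ℕ → Ω → ℤ) (L U x : ℤ) (k : ℕ) (ω : Ω) : ℕ :=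
  if ∃ l ≤ k, (x + ladderS ξ l ω ≤ L ∨ U ≤ x + ladderS ξ l ω)
  then sInf {l | l ≤ k ∧ (x + ladderS ξ l ω ≤ L ∨ U ≤ x + ladderS ξ l ω)}
  else k

/-- The event `A_k^x`: the walk started at `x` exits through the lower
barrier `L` within the first `k` steps. -/
def ladderA (ξ : ℕ → Ω → ℤ) (L U x : ℤ) (k : ℕ) : Set Ω :=
  ⋃ l ∈ Finset.range (k + 1),
    {ω | ladderTau ξ L U x k ω = l ∧ x + ladderS ξ l ω ≤ L}

/-- The event `B_k^x`: the walk started at `x` exits through the upper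
barrier `U` within the first `k` steps. -/
def ladderB (ξ : ℕ → Ω → ℤ) (L U x : ℤ) (k : ℕ) : Set Ω :=
  ⋃ l ∈ Finset.range (k + 1),
    {ω | ladderTau ξ L U x k ω = l ∧ U ≤ x + ladderS ξ l ω}

open Function Topology

lemma ProbabilityTheory.iIndepFun.iIndepSet_biInter_preimage {ι κ β : Type*}
    [MeasurableSpace β] {P : Measure Ω} {f : ι → Ω → β} (hf : iIndepFun f P)
    (hmeas : ∀ i, Measurable (f i)) {t : ι → Set β} (ht : ∀ i, MeasurableSet (t i))
    {I : κ → Finset ι} (hI : Pairwise (Disjoint on I)) :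
    iIndepSet (fun j => ⋂ i ∈ I j, f i ⁻¹' t i) P := by
  have hfactor : ∀ s : Finset ι, P (⋂ i ∈ s, f i ⁻¹' t i) = ∏ i ∈ s, P (f i ⁻¹' t i) :=
    fun s => hf.meas_biInter fun i _ => ⟨t i, ht i, rfl⟩
  rw [iIndepSet_iff_meas_biInter fun j =>
    Finset.measurableSet_biInter _ fun i _ => hmeas i (ht i)]
  intro s
  rw [← Finset.set_biInter_biUnion, hfactor, Finset.prod_biUnion (hI.set_pairwise _)]
  simp only [hfactor]

lemma prob_preimage_neg_one_eq_one_sub {P : Measure Ω} [IsProbabilityMeasure P] {f : Ω → ℤ}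
    (hf : Measurable f) (hval : ∀ ω, f ω = 1 ∨ f ω = -1) :
    P (f ⁻¹' {-1}) = 1 - P (f ⁻¹' {1}) := by
  rw [← prob_compl_eq_one_sub (hf (measurableSet_singleton 1))]
  congr 1
  ext ω
  rcases hval ω with h | h <;> simp [h]

lemma pairwise_disjoint_Ioc_mul (N : ℕ) :
    Pairwise (Disjoint on fun j => Finset.Ioc (j * N) (j * N + N)) := by
  intro i j hij
  refine Finset.disjoint_left.2 fun n hi hj => hij ?_
  rw [Finset.mem_Ioc] at hi hj
  have hj_lt : j < i + 1 := Nat.lt_of_mul_lt_mul_right (a := N) (by rw [add_one_mul]; omega)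
  have hi_lt : i < j + 1 := Nat.lt_of_mul_lt_mul_right (a := N) (by rw [add_one_mul]; omega)
  omega

def ladderExitBy (ξ : ℕ → Ω → ℤ) (L U x : ℤ) (k : ℕ) : Set Ω :=
  {ω | ∃ l ≤ k, x + ladderS ξ l ω ≤ L ∨ U ≤ x + ladderS ξ l ω}

def ladderRun (ξ : ℕ → Ω → ℤ) (N j : ℕ) : Set Ω :=
  ⋂ n ∈ Finset.Ioc (j * N) (j * N + N), ξ n ⁻¹' {-1}

section Paths

omit [MeasurableSpace Ω]

lemma ladderX_of_eq_neg_one {ξ : ℕ → Ω → ℤ} {k : ℕ} {ω : Ω} (h : ξ k ω = -1) :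
    ladderX ξ k ω = -1 := by
  unfold ladderX
  split_ifs <;> simp_all

lemma ladderS_succ (ξ : ℕ → Ω → ℤ) (n : ℕ) (ω : Ω) :
    ladderS ξ (n + 1) ω = ladderS ξ n ω + ladderX ξ (n + 1) ω :=
  Finset.sum_Icc_succ_top (Nat.le_add_left 1 n) _

lemma ladderS_add_of_eq_neg_one {ξ : ℕ → Ω → ℤ} {n m : ℕ} {ω : Ω}
    (h : ∀ i ∈ Finset.Ioc n (n + m), ξ i ω = -1) :
    ladderS ξ (n + m) ω = ladderS ξ n ω - m := by
  induction m with
  | zero => simp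
  | succ m ih =>
    have hdown : ξ (n + m + 1) ω = -1 := h _ (Finset.mem_Ioc.2 ⟨by omega, by omega⟩)
    rw [← add_assoc, ladderS_succ, ladderX_of_eq_neg_one hdown,
      ih fun i hi => h i (Finset.Ioc_subset_Ioc_right (by omega) hi)]
    push_cast
    ring

lemma ladderRun_subset_ladderExitBy {ξ : ℕ → Ω → ℤ} {L U : ℤ} {N : ℕ} (hN : U - L ≤ N)
    (x : ℤ) (j : ℕ) : ladderRun ξ N j ⊆ ladderExitBy ξ L U x (j * N + N) := by
  intro ω hω
  have hdrop : ladderS ξ (j * N + N) ω = ladderS ξ (j * N) ω - N :=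
    ladderS_add_of_eq_neg_one fun i hi => Set.mem_iInter₂.1 hω i hi
  by_cases hup : U ≤ x + ladderS ξ (j * N) ω
  · exact ⟨j * N, by omega, Or.inr hup⟩
  · exact ⟨j * N + N, le_rfl, Or.inl (by omega)⟩

lemma ladderTau_eq_hittingBtwn (ξ : ℕ → Ω → ℤ) (L U x : ℤ) (k : ℕ) :
    ladderTau ξ L U x k =
      hittingBtwn (fun l ω => x + ladderS ξ l ω) {z | z ≤ L ∨ U ≤ z} 0 k := by
  ext ω
  simp only [ladderTau, hittingBtwn, Set.mem_Icc, zero_le, true_and]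
  congr 2
  ext l
  simp

variable {ξ : ℕ → Ω → ℤ} {L U x : ℤ} {k : ℕ} {ω : Ω}

lemma ladderTau_le : ladderTau ξ L U x k ω ≤ k := by
  rw [ladderTau_eq_hittingBtwn]
  exact hittingBtwn_le ω

lemma ladderS_ladderTau_le_or_ge (h : ω ∈ ladderExitBy ξ L U x k) :
    x + ladderS ξ (ladderTau ξ L U x k ω) ω ≤ L ∨
      U ≤ x + ladderS ξ (ladderTau ξ L U x k ω) ω := by
  obtain ⟨l, hl, hexit⟩ := h
  rw [ladderTau_eq_hittingBtwn]
  exact hittingBtwn_mem_set (u := fun l ω => x + ladderS ξ l ω) (s := {z | z ≤ L ∨ U ≤ z})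
    ⟨l, ⟨l.zero_le, hl⟩, hexit⟩

lemma mem_ladderA_iff :
    ω ∈ ladderA ξ L U x k ↔ x + ladderS ξ (ladderTau ξ L U x k ω) ω ≤ L := by
  simp only [ladderA, Set.mem_iUnion, Finset.mem_range, Set.mem_ofPred_eq, exists_prop]
  exact ⟨fun ⟨_, _, hτ, h⟩ => hτ ▸ h, fun h => ⟨_, Nat.lt_succ_of_le ladderTau_le, rfl, h⟩⟩

lemma mem_ladderB_iff :
    ω ∈ ladderB ξ L U x k ↔ U ≤ x + ladderS ξ (ladderTau ξ L U x k ω) ω := by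
  simp only [ladderB, Set.mem_iUnion, Finset.mem_range, Set.mem_ofPred_eq, exists_prop]
  exact ⟨fun ⟨_, _, hτ, h⟩ => hτ ▸ h, fun h => ⟨_, Nat.lt_succ_of_le ladderTau_le, rfl, h⟩⟩

lemma ladderA_union_ladderB :
    ladderA ξ L U x k ∪ ladderB ξ L U x k = ladderExitBy ξ L U x k := by
  ext ω
  rw [Set.mem_union, mem_ladderA_iff, mem_ladderB_iff]
  exact ⟨fun h => ⟨_, ladderTau_le, h⟩, ladderS_ladderTau_le_or_ge⟩

lemma disjoint_ladderA_ladderB (hLU : L < U) :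
    Disjoint (ladderA ξ L U x k) (ladderB ξ L U x k) :=
  Set.disjoint_left.2 fun ω hA hB => by
    rw [mem_ladderA_iff] at hA
    rw [mem_ladderB_iff] at hB
    omega

end Paths

lemma measurable_ladderS {ξ : ℕ → Ω → ℤ} (hξ : ∀ n, Measurable (ξ n)) (n : ℕ) :
    Measurable (ladderS ξ n) := by
  refine Finset.measurable_sum _ fun k _ => ?_
  unfold ladderX
  refine Measurable.ite (.const _) (.ite (hξ 1 (measurableSet_singleton 1)) ?_ ?_)
    (.ite (hξ k (measurableSet_singleton (-1))) ?_
      (.ite (hξ (k - 1) (measurableSet_singleton 1)) ?_ ?_)) <;> exact measurable_const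

lemma measurableSet_ladderTau_eq {ξ : ℕ → Ω → ℤ} (hξ : ∀ n, Measurable (ξ n))
    (L U x : ℤ) (k l : ℕ) : MeasurableSet {ω | ladderTau ξ L U x k ω = l} := by
  have hτ : IsStoppingTime (Filtration.const ℕ ‹MeasurableSpace Ω› le_rfl)
      (fun ω => (ladderTau ξ L U x k ω : ℕ)) := by
    rw [ladderTau_eq_hittingBtwn]
    exact Adapted.isStoppingTime_hittingBtwn
      (fun l => measurable_const.add (measurable_ladderS hξ l)) .of_discrete
  exact Filtration.le _ l _ (by simpa using hτ.measurableSet_eq l)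

lemma measurableSet_ladderB {ξ : ℕ → Ω → ℤ} (hξ : ∀ n, Measurable (ξ n)) (L U x : ℤ) (k : ℕ) :
    MeasurableSet (ladderB ξ L U x k) :=
  Finset.measurableSet_biUnion _ fun l _ => (measurableSet_ladderTau_eq hξ L U x k l).inter
    (measurableSet_le measurable_const (measurable_const.add (measurable_ladderS hξ l)))

lemma measure_ladderA_add_measure_ladderB {ξ : ℕ → Ω → ℤ} (hξ : ∀ n, Measurable (ξ n))
    (P : Measure Ω) {L U : ℤ} (hLU : L < U) (x : ℤ) (k : ℕ) :
    P (ladderA ξ L U x k) + P (ladderB ξ L U x k) = P (ladderExitBy ξ L U x k) := by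
  rw [← measure_union (disjoint_ladderA_ladderB hLU) (measurableSet_ladderB hξ L U x k),
    ladderA_union_ladderB]

section Probability

variable {p : ℝ} {P : Measure Ω} [IsProbabilityMeasure P] {ξ : ℕ → Ω → ℤ}
  (hmeas : ∀ n, Measurable (ξ n)) (hindep : iIndepFun ξ P)
  (hval : ∀ n ω, ξ n ω = 1 ∨ ξ n ω = -1)
  (hprob : ∀ n, 1 ≤ n → P {ω | ξ n ω = 1} = ENNReal.ofReal p)
include hmeas hindep hval hprob

lemma measure_ladderRun (N j : ℕ) : P (ladderRun ξ N j) = (1 - ENNReal.ofReal p) ^ N := by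
  have hdown : ∀ n ∈ Finset.Ioc (j * N) (j * N + N), P (ξ n ⁻¹' {-1}) = 1 - ENNReal.ofReal p :=
    fun n hn => by
      rw [prob_preimage_neg_one_eq_one_sub (hmeas n) (hval n)]
      exact congrArg _ (hprob n (by rw [Finset.mem_Ioc] at hn; omega))
  rw [ladderRun, hindep.meas_biInter fun n _ => ⟨{-1}, measurableSet_singleton _, rfl⟩,
    Finset.prod_congr rfl hdown, Finset.prod_const, Nat.card_Ioc, Nat.add_sub_cancel_left]

lemma measure_iUnion_ladderExitBy (hp1 : p < 1) (L U x : ℤ) :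
    P (⋃ k, ladderExitBy ξ L U x k) = 1 := by
  set N := (U - L).toNat
  have hrun_meas : ∀ j, MeasurableSet (ladderRun ξ N j) := fun j =>
    Finset.measurableSet_biInter _ fun n _ => hmeas n (measurableSet_singleton _)
  have hrun_indep : iIndepSet (ladderRun ξ N) P :=
    hindep.iIndepSet_biInter_preimage hmeas (fun _ => measurableSet_singleton (-1))
      (pairwise_disjoint_Ioc_mul N)
  have hrun_sum : ∑' j, P (ladderRun ξ N j) = ⊤ := by
    simp only [measure_ladderRun hmeas hindep hval hprob]
    exact ENNReal.tsum_const_eq_top_of_ne_zero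
      (pow_ne_zero _ (tsub_pos_of_lt (ENNReal.ofReal_lt_one.2 hp1)).ne')
  refine le_antisymm prob_le_one ?_
  calc 1 = P (limsup (ladderRun ξ N) atTop) :=
        (measure_limsup_eq_one hrun_meas hrun_indep hrun_sum).symm
    _ ≤ P (⋃ k, ladderExitBy ξ L U x k) := measure_mono <| limsup_le_iSup.trans <|
        Set.iUnion_mono' fun j =>
          ⟨j * N + N, ladderRun_subset_ladderExitBy (Int.self_le_toNat _) x j⟩

lemma tendsto_measure_ladderExitBy (hp1 : p < 1) (L U x : ℤ) :
    Tendsto (fun k => P (ladderExitBy ξ L U x k)) atTop (𝓝 1) := by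
  rw [← measure_iUnion_ladderExitBy hmeas hindep hval hprob hp1 L U x]
  exact tendsto_measure_iUnion_atTop fun k k' hk ω ⟨l, hl, hexit⟩ => ⟨l, hl.trans hk, hexit⟩

end Probability

theorem ladder_alpha_add_beta_eq_one_general (p : ℝ) (hp1 : p < 1)
    (P : Measure Ω) [IsProbabilityMeasure P]
    (ξ : ℕ → Ω → ℤ) (hmeas : ∀ n, Measurable (ξ n))
    (hindep : iIndepFun ξ P)
    (hval : ∀ n ω, ξ n ω = 1 ∨ ξ n ω = -1)
    (hprob : ∀ n, 1 ≤ n → P {ω | ξ n ω = 1} = ENNReal.ofReal p)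
    (L U : ℤ) (hLU : U - L ≥ 4)
    (a b : ℤ → ℝ)
    (ha : ∀ x : ℤ, L ≤ x → x ≤ U →
      Tendsto (fun k => (P (ladderA ξ L U x k)).toReal) atTop (nhds (a x)))
    (hb : ∀ x : ℤ, L ≤ x → x ≤ U →
      Tendsto (fun k => (P (ladderB ξ L U x k)).toReal) atTop (nhds (b x))) :
    ∀ x : ℤ, L ≤ x → x ≤ U → a x + b x = 1 := by
  intro x hxL hxU
  have hexit := (ENNReal.tendsto_toReal ENNReal.one_ne_top).comp
    (tendsto_measure_ladderExitBy hmeas hindep hval hprob hp1 L U x)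
  refine tendsto_nhds_unique ((ha x hxL hxU).add (hb x hxL hxU)) ?_
  simpa only [Function.comp_def, ← measure_ladderA_add_measure_ladderB hmeas P (by omega : L < U),
    ENNReal.toReal_add (measure_ne_top _ _) (measure_ne_top _ _), ENNReal.toReal_one] using hexit

/-- If `U - L ≥ 4` then `α(x) + β(x) = 1` for every integer
`x ∈ [L, U]`: the walk exits the interval `(L, U)` in finite time a.s. -/
theorem ladder_alpha_add_beta_eq_one (p : ℝ) (hp0 : 0 < p) (hp1 : p < 1)
    (P : Measure Ω) [IsProbabilityMeasure P]
    (ξ : ℕ → Ω → ℤ) (hmeas : ∀ n, Measurable (ξ n))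
    (hindep : iIndepFun ξ P)
    (hval : ∀ n ω, ξ n ω = 1 ∨ ξ n ω = -1)
    (hprob : ∀ n, 1 ≤ n → P {ω | ξ n ω = 1} = ENNReal.ofReal p)
    (L U : ℤ) (hLU : U - L ≥ 4)
    (a b : ℤ → ℝ)
    (ha : ∀ x : ℤ, L ≤ x → x ≤ U →
      Tendsto (fun k => (P (ladderA ξ L U x k)).toReal) atTop (nhds (a x)))
    (hb : ∀ x : ℤ, L ≤ x → x ≤ U →
      Tendsto (fun k => (P (ladderB ξ L U x k)).toReal) atTop (nhds (b x))) :
    ∀ x : ℤ, L ≤ x → x ≤ U → a x + b x = 1 :=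
  ladder_alpha_add_beta_eq_one_general p hp1 P ξ hmeas hindep hval hprob L U hLU a b ha hb

end
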